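/- Let C be an abelian category and 𝒲 a class of objects of C closed under isomorphisms and finite direct sums. Define G¹(𝒲) = G(𝒲) and inductively G^{n+1}(𝒲) = G(Gⁿ(𝒲)) for n ≥ 1 (this makes sense since G(𝒲) is again a class of objects closed under isomorphisms and finite direct sums). Then Gⁿ(𝒲) = G(𝒲) for every n ≥ 1; in particular G(G(𝒲)) = G(𝒲), i.e., an object of C admits a complete G(𝒲)-resolution if and only if it admits a complete 𝒲-resolution. -/

import Mathlib

open CategoryTheory Category Limits

universe v u

variable {C : Type u} [Category.{v} C] [Abelian C]

def SES {A B X : C} (f : A ⟶ B) (g : B ⟶ X) : Prop :=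
  ∃ w : f ≫ g = 0, (CategoryTheory.ShortComplex.mk f g w).ShortExact

def CovExact (𝒲 : Set C) {A B X : C} (f : A ⟶ B) (g : B ⟶ X) : Prop :=
  ∀ W ∈ 𝒲,
    (Function.Injective fun u : W ⟶ A => u ≫ f) ∧
    (∀ v : W ⟶ B, v ≫ g = 0 → ∃ u : W ⟶ A, u ≫ f = v) ∧
    (Function.Surjective fun v : W ⟶ B => v ≫ g)

def ContraExact (𝒲 : Set C) {A B X : C} (f : A ⟶ B) (g : B ⟶ X) : Prop :=
  ∀ W ∈ 𝒲,
    (Function.Injective fun u : X ⟶ W => g ≫ u) ∧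
    (∀ v : B ⟶ W, f ≫ v = 0 → ∃ u : X ⟶ W, g ≫ u = v) ∧
    (Function.Surjective fun v : B ⟶ W => f ≫ v)

/-- A proper `𝒲`-resolution of `A` with terms `W i`: short exact sequences
`0 ⟶ K (i+1) ⟶ W i ⟶ K i ⟶ 0` with `K 0 = A`, each `W i ∈ 𝒲`, each `Hom(𝒲,-)`-exact. -/
structure ProperResolution (𝒲 : Set C) (A : C) (W : ℕ → C) where
  K : ℕ → C
  hK : K 0 = A
  g : ∀ i, K (i + 1) ⟶ W i
  f : ∀ i, W i ⟶ K i
  mem : ∀ i, W i ∈ 𝒲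
  ses : ∀ i, SES (g i) (f i)
  proper : ∀ i, CovExact 𝒲 (g i) (f i)

/-- The proper resolution is in addition `Hom(-,𝒲)`-exact. -/
def ProperResolution.IsContraExact {𝒲 : Set C} {A : C} {W : ℕ → C}
    (R : ProperResolution 𝒲 A W) : Prop :=
  ∀ i, ContraExact 𝒲 (R.g i) (R.f i)

/-- A coproper `𝒲`-coresolution of `A` with terms `W i`: short exact sequences
`0 ⟶ K i ⟶ W i ⟶ K (i+1) ⟶ 0` with `K 0 = A`, each `W i ∈ 𝒲`, each `Hom(-,𝒲)`-exact. -/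
structure CoproperCoresolution (𝒲 : Set C) (A : C) (W : ℕ → C) where
  K : ℕ → C
  hK : K 0 = A
  g : ∀ i, K i ⟶ W i
  f : ∀ i, W i ⟶ K (i + 1)
  mem : ∀ i, W i ∈ 𝒲
  ses : ∀ i, SES (g i) (f i)
  coproper : ∀ i, ContraExact 𝒲 (g i) (f i)

/-- The coproper coresolution is in addition `Hom(𝒲,-)`-exact. -/
def CoproperCoresolution.IsCovExact {𝒲 : Set C} {A : C} {W : ℕ → C}
    (R : CoproperCoresolution 𝒲 A W) : Prop :=
  ∀ i, CovExact 𝒲 (R.g i) (R.f i)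

/-- Membership in the Gorenstein category `G(𝒲)`: `X` admits both a proper `𝒲`-resolution
which is `Hom(-,𝒲)`-exact and a coproper `𝒲`-coresolution which is `Hom(𝒲,-)`-exact
(i.e. a complete `𝒲`-resolution). -/
def MemGW (𝒲 : Set C) (X : C) : Prop :=
  (∃ (W : ℕ → C) (R : ProperResolution 𝒲 X W), R.IsContraExact) ∧
  (∃ (W : ℕ → C) (R : CoproperCoresolution 𝒲 X W), R.IsCovExact)


/-- The Gorenstein category `G(𝒲)` as a class of objects. -/
def GW (𝒲 : Set C) : Set C := {X | MemGW 𝒲 X}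

/-!
The inclusion `G(𝒲) ⊆ G(G(𝒲))` holds because every object of a class `𝒱` has a trivial
complete `𝒱`-resolution by itself. For the converse it suffices, by duality, to turn a resolution
of `X` by objects of `G(𝒲)`, spliced from `𝒲`-biexact sequences, into one by objects of `𝒲`.
This is done one step at a time, keeping a `𝒲`-biexact extension `0 ⟶ H ⟶ L ⟶ K ⟶ 0` in which
`H` has a complete `𝒲`-resolution and `K` a `G(𝒲)`-resolution (initially `H = 0`, `L = K = X`).
Replacing the first term `G` of the resolution of `K` by the first term of a `𝒲`-resolution of
`G` and applying the horseshoe construction yields `0 ⟶ N ⟶ W ⟶ L ⟶ 0` with `W ∈ 𝒲`, where `N`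
is again such an extension: of the first syzygy of `K` by an extension of two objects with
complete `𝒲`-resolutions, which has one by the horseshoe lemma. All kernels that occur are
controlled by the snake lemma in a nine diagram, and biexactness passes to them by diagram
chases in `Hom`.
-/

open ZeroObject

namespace SES

variable {A B X : C} {f : A ⟶ B} {g : B ⟶ X}

lemma w (h : SES f g) : f ≫ g = 0 := h.choose

lemma shortExact (h : SES f g) : (ShortComplex.mk f g h.w).ShortExact := h.choose_spec

lemma mono (h : SES f g) : Mono f := h.shortExact.mono_f

lemma epi (h : SES f g) : Epi g := h.shortExact.epi_g

lemma exact (h : SES f g) : (ShortComplex.mk f g h.w).Exact := h.shortExact.exact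

lemma exists_lift (h : SES f g) {T : C} (v : T ⟶ B) (hv : v ≫ g = 0) :
    ∃ u : T ⟶ A, u ≫ f = v :=
  have := h.mono
  h.exact.lift' v hv

lemma exists_desc (h : SES f g) {T : C} (v : B ⟶ T) (hv : f ≫ v = 0) :
    ∃ u : X ⟶ T, g ≫ u = v :=
  have := h.epi
  h.exact.desc' v hv

lemma op (h : SES f g) : SES g.op f.op :=
  ⟨by rw [← op_comp, h.w, op_zero], h.shortExact.op⟩

lemma unop {A B X : Cᵒᵖ} {f : A ⟶ B} {g : B ⟶ X} (h : SES f g) : SES g.unop f.unop :=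
  ⟨by rw [← unop_comp, h.w, unop_zero], h.shortExact.unop⟩

lemma of_epi (g : B ⟶ X) [Epi g] : SES (kernel.ι g) g :=
  ⟨kernel.condition g, .mk' (ShortComplex.exact_of_f_is_kernel _ (kernelIsKernel g))
    (inferInstanceAs (Mono (kernel.ι g))) (inferInstanceAs (Epi g))⟩

lemma of_splitting (w : f ≫ g = 0) (s : (ShortComplex.mk f g w).Splitting) : SES f g :=
  ⟨w, s.shortExact⟩

section Pseudoelement

open Abelian Pseudoelement
open scoped Pseudoelement

lemma pseudo_exact (h : SES f g) (b : B) (hb : g b = 0) : ∃ a, f a = b :=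
  pseudo_exact_of_exact h.exact b hb

lemma apply_apply (h : SES f g) (a : A) : g (f a) = 0 := by
  rw [← Pseudoelement.comp_apply, h.w, Pseudoelement.zero_apply]

lemma of_pseudo (w : f ≫ g = 0) [Mono f] (hfg : ∀ b, g b = 0 → ∃ a, f a = b)
    (hg : Function.Surjective g) : SES f g :=
  ⟨w, .mk' (exact_of_pseudo_exact _ hfg) ‹_› (epi_of_pseudo_surjective g hg)⟩

end Pseudoelement

end SES

/-- For a short exact sequence, `Hom(W,-)`- and `Hom(-,W)`-exactness reduce to these lifting and
extension properties (`biexact_iff`). -/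
structure Biexact (E : Set C) {A B X : C} (f : A ⟶ B) (g : B ⟶ X) : Prop where
  ses : SES f g
  exists_lift : ∀ W ∈ E, ∀ v : W ⟶ X, ∃ u : W ⟶ B, u ≫ g = v
  exists_extend : ∀ W ∈ E, ∀ φ : A ⟶ W, ∃ ψ : B ⟶ W, f ≫ ψ = φ

section Biexact

variable {E E' : Set C} {A B X : C} {f : A ⟶ B} {g : B ⟶ X}

lemma biexact_iff : Biexact E f g ↔ SES f g ∧ CovExact E f g ∧ ContraExact E f g := by
  refine ⟨fun h => ⟨h.ses, fun W hW => ?_, fun W hW => ?_⟩,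
    fun ⟨hses, hcov, hcontra⟩ =>
      ⟨hses, fun W hW => (hcov W hW).2.2, fun W hW => (hcontra W hW).2.2⟩⟩
  · have := h.ses.mono
    exact ⟨fun _ _ huu => (cancel_mono f).1 huu, fun v hv => h.ses.exists_lift v hv,
      h.exists_lift W hW⟩
  · have := h.ses.epi
    exact ⟨fun _ _ huu => (cancel_epi g).1 huu, fun v hv => h.ses.exists_desc v hv,
      h.exists_extend W hW⟩

lemma Biexact.anti (h : Biexact E' f g) (hE : E ⊆ E') : Biexact E f g :=
  ⟨h.ses, fun W hW => h.exists_lift W (hE hW), fun W hW => h.exists_extend W (hE hW)⟩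

lemma Biexact.op (h : Biexact E f g) : Biexact E.op g.op f.op where
  ses := h.ses.op
  exists_lift W hW v := by
    obtain ⟨ψ, hψ⟩ := h.exists_extend _ hW v.unop
    exact ⟨ψ.op, by rw [← op_comp, hψ, Quiver.Hom.op_unop]⟩
  exists_extend W hW φ := by
    obtain ⟨u, hu⟩ := h.exists_lift _ hW φ.unop
    exact ⟨u.op, by rw [← op_comp, hu, Quiver.Hom.op_unop]⟩

lemma Biexact.unop {A B X : Cᵒᵖ} {f : A ⟶ B} {g : B ⟶ X} (h : Biexact E.op f g) :
    Biexact E g.unop f.unop where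
  ses := h.ses.unop
  exists_lift W hW v := by
    obtain ⟨ψ, hψ⟩ := h.exists_extend (Opposite.op W) hW v.op
    exact ⟨ψ.unop, by rw [← unop_comp, hψ, Quiver.Hom.unop_op]⟩
  exists_extend W hW φ := by
    obtain ⟨u, hu⟩ := h.exists_lift (Opposite.op W) hW φ.op
    exact ⟨u.unop, by rw [← unop_comp, hu, Quiver.Hom.unop_op]⟩

variable (E)

lemma biexact_zero_id (X : C) : Biexact E (0 : (0 : C) ⟶ X) (𝟙 X) :=
  ⟨.of_splitting (by simp) (.ofIsZeroOfIsIso _ (isZero_zero C) (by dsimp; infer_instance)),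
    fun _ _ v => ⟨v, comp_id v⟩, fun _ _ _ => ⟨0, (isZero_zero C).eq_of_src _ _⟩⟩

lemma biexact_id_zero (X : C) : Biexact E (𝟙 X) (0 : X ⟶ (0 : C)) :=
  ⟨.of_splitting (by simp) (.ofIsIsoOfIsZero _ (by dsimp; infer_instance) (isZero_zero C)),
    fun _ _ _ => ⟨0, (isZero_zero C).eq_of_tgt _ _⟩, fun _ _ φ => ⟨φ, id_comp φ⟩⟩

lemma biexact_inl_snd (U V : C) : Biexact E (biprod.inl : U ⟶ U ⊞ V) biprod.snd :=
  ⟨.of_splitting (by simp) (.ofHasBinaryBiproduct U V),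
    fun _ _ v => ⟨v ≫ biprod.inr, by simp⟩, fun _ _ φ => ⟨biprod.fst ≫ φ, by simp⟩⟩

end Biexact

/-! The lemmas of this section concern a commutative diagram
```
K₁ --α--> K₂ --β--> K₃
|k₁       |k₂       |k₃
P₁ --i--> P₂ --p--> P₃
|τ₁       |τ₂       |τ₃
Q₁ --a--> Q₂ --b--> Q₃
```
whose columns and two lower rows are short exact. -/
section NineDiagram

open Abelian Pseudoelement Preadditive
open scoped Pseudoelement

variable {E : Set C} {K₁ K₂ K₃ P₁ P₂ P₃ Q₁ Q₂ Q₃ : C}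
  {α : K₁ ⟶ K₂} {β : K₂ ⟶ K₃} {k₁ : K₁ ⟶ P₁} {k₂ : K₂ ⟶ P₂} {k₃ : K₃ ⟶ P₃}
  {i : P₁ ⟶ P₂} {p : P₂ ⟶ P₃} {τ₁ : P₁ ⟶ Q₁} {τ₂ : P₂ ⟶ Q₂} {τ₃ : P₃ ⟶ Q₃}
  {a : Q₁ ⟶ Q₂} {b : Q₂ ⟶ Q₃}

/-- The snake lemma when `τ₁` and `τ₃` are epimorphisms. -/
lemma SES.of_nine (hα : α ≫ k₂ = k₁ ≫ i) (hβ : β ≫ k₃ = k₂ ≫ p) (hi : i ≫ τ₂ = τ₁ ≫ a)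
    (hp : τ₂ ≫ b = p ≫ τ₃) (h₁ : SES k₁ τ₁) (h₂ : SES k₂ τ₂) (h₃ : SES k₃ τ₃)
    (hip : SES i p) (hab : SES a b) : SES α β := by
  have := h₁.mono; have := h₁.epi; have := h₂.mono; have := h₃.mono
  have := hip.mono; have := hip.epi; have := hab.mono
  have : Mono α := mono_of_mono_fac hα
  have hw : α ≫ β = 0 := by
    rw [← cancel_mono k₃, assoc, hβ, reassoc_of% hα, hip.w, comp_zero, zero_comp]
  refine SES.of_pseudo hw (fun n hn => ?_) (fun c => ?_)
  · have hpn : p (k₂ n) = 0 := by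
      rw [← Pseudoelement.comp_apply, ← hβ, Pseudoelement.comp_apply, hn, apply_zero]
    obtain ⟨x₁, hx₁⟩ := hip.pseudo_exact _ hpn
    have hτx₁ : τ₁ x₁ = 0 := by
      refine zero_of_map_zero a (pseudo_injective_of_mono a) _ ?_
      rw [← Pseudoelement.comp_apply, ← hi, Pseudoelement.comp_apply, hx₁, h₂.apply_apply]
    obtain ⟨y, rfl⟩ := h₁.pseudo_exact _ hτx₁
    refine ⟨y, pseudo_injective_of_mono k₂ ?_⟩
    rw [← Pseudoelement.comp_apply, hα, Pseudoelement.comp_apply, hx₁]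
  · obtain ⟨x₂, hx₂⟩ := pseudo_surjective_of_epi p (k₃ c)
    have hbx₂ : b (τ₂ x₂) = 0 := by
      rw [← Pseudoelement.comp_apply, hp, Pseudoelement.comp_apply, hx₂, h₃.apply_apply]
    obtain ⟨q, hq⟩ := hab.pseudo_exact _ hbx₂
    obtain ⟨x₁, rfl⟩ := pseudo_surjective_of_epi τ₁ q
    have heq : τ₂ x₂ = τ₂ (i x₁) := by
      rw [← Pseudoelement.comp_apply, hi, Pseudoelement.comp_apply, hq]
    -- `z` is the difference `x₂ - i x₁`, which lies in the kernel of `τ₂`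
    obtain ⟨z, hz, hpz⟩ := sub_of_eq_image τ₂ _ _ heq
    obtain ⟨n, rfl⟩ := h₂.pseudo_exact z hz
    refine ⟨n, pseudo_injective_of_mono k₃ ?_⟩
    rw [← Pseudoelement.comp_apply, hβ, Pseudoelement.comp_apply, hpz _ p (hip.apply_apply x₁), hx₂]

lemma biexact_middle_column (hα : α ≫ k₂ = k₁ ≫ i) (hβ : β ≫ k₃ = k₂ ≫ p)
    (hi : i ≫ τ₂ = τ₁ ≫ a) (hp : τ₂ ≫ b = p ≫ τ₃) (h₁ : Biexact E k₁ τ₁) (h₂ : SES k₂ τ₂)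
    (h₃ : Biexact E k₃ τ₃) (hip : Biexact E i p) (hab : SES a b) (hαβ : SES α β) :
    Biexact E k₂ τ₂ := by
  refine ⟨h₂, fun W hW v => ?_, fun W hW φ => ?_⟩
  · obtain ⟨s₃, hs₃⟩ := h₃.exists_lift W hW (v ≫ b)
    obtain ⟨s₂, hs₂⟩ := hip.exists_lift W hW s₃
    obtain ⟨q, hq⟩ := hab.exists_lift (v - s₂ ≫ τ₂)
      (by rw [sub_comp, assoc, hp, reassoc_of% hs₂, hs₃, sub_self])
    obtain ⟨q', hq'⟩ := h₁.exists_lift W hW q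
    exact ⟨s₂ + q' ≫ i, by rw [add_comp, assoc, hi, reassoc_of% hq', hq, add_sub_cancel]⟩
  · obtain ⟨ψ₁, hψ₁⟩ := h₁.exists_extend W hW (α ≫ φ)
    obtain ⟨ψ, hψ⟩ := hip.exists_extend W hW ψ₁
    obtain ⟨ε, hε⟩ := hαβ.exists_desc (φ - k₂ ≫ ψ)
      (by rw [comp_sub, reassoc_of% hα, hψ, hψ₁, sub_self])
    obtain ⟨ζ, hζ⟩ := h₃.exists_extend W hW ε
    exact ⟨ψ + p ≫ ζ, by rw [comp_add, ← reassoc_of% hβ, hζ, hε, add_sub_cancel]⟩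

lemma biexact_kernel_row (hα : α ≫ k₂ = k₁ ≫ i) (hβ : β ≫ k₃ = k₂ ≫ p)
    (hi : i ≫ τ₂ = τ₁ ≫ a) (hp : τ₂ ≫ b = p ≫ τ₃) (h₁ : Biexact E k₁ τ₁) (h₂ : SES k₂ τ₂)
    (h₃ : SES k₃ τ₃) (hip : Biexact E i p) (hab : SES a b) (hαβ : SES α β) :
    Biexact E α β := by
  refine ⟨hαβ, fun W hW v => ?_, fun W hW φ => ?_⟩
  · obtain ⟨s, hs⟩ := hip.exists_lift W hW (v ≫ k₃)
    obtain ⟨q, hq⟩ := hab.exists_lift (s ≫ τ₂) (by rw [assoc, hp, reassoc_of% hs, h₃.w, comp_zero])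
    obtain ⟨q', hq'⟩ := h₁.exists_lift W hW q
    obtain ⟨n, hn⟩ := h₂.exists_lift (s - q' ≫ i)
      (by rw [sub_comp, assoc, hi, reassoc_of% hq', hq, sub_self])
    have := h₃.mono
    refine ⟨n, by rw [← cancel_mono k₃, assoc, hβ, reassoc_of% hn, sub_comp, assoc,
      hip.ses.w, comp_zero, sub_zero, hs]⟩
  · obtain ⟨ψ₁, hψ₁⟩ := h₁.exists_extend W hW φ
    obtain ⟨ψ, hψ⟩ := hip.exists_extend W hW ψ₁
    exact ⟨k₂ ≫ ψ, by rw [reassoc_of% hα, hψ, hψ₁]⟩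

end NineDiagram

section KernelConstructions

variable {E : Set C}

lemma Biexact.exists_kernel_comp {X Y Z W V : C} {x : X ⟶ Y} {y : Y ⟶ Z} {w : W ⟶ V}
    {v : V ⟶ Y} (hxy : Biexact E x y) (hwv : Biexact E w v) :
    ∃ (M : C) (m : M ⟶ V) (t : W ⟶ M) (r : M ⟶ X), Biexact E m (v ≫ y) ∧ Biexact E t r := by
  have := hwv.ses.epi; have := hxy.ses.epi
  obtain ⟨r, hr⟩ := hxy.ses.exists_lift (kernel.ι (v ≫ y) ≫ v) (by simp)
  let t := kernel.lift (v ≫ y) w (by rw [reassoc_of% hwv.ses.w, zero_comp])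
  -- the nine diagram with rows `(t, r)`, `(w, v)`, `(0, 𝟙 Z)`
  -- and columns `(𝟙 W, 0)`, `(kernel.ι, v ≫ y)`, `(x, y)`
  have ht : t ≫ kernel.ι (v ≫ y) = 𝟙 W ≫ w := by simp [t]
  have hwvy : w ≫ v ≫ y = 0 ≫ (0 : (0 : C) ⟶ Z) := by simp [reassoc_of% hwv.ses.w]
  have hvy : (v ≫ y) ≫ 𝟙 Z = v ≫ y := comp_id _
  have hk := SES.of_epi (v ≫ y)
  have htr := SES.of_nine ht hr hwvy hvy (biexact_id_zero E W).ses hk hxy.ses hwv.ses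
    (biexact_zero_id E Z).ses
  exact ⟨_, _, t, r,
    biexact_middle_column ht hr hwvy hvy (biexact_id_zero E W) hk hxy hwv
      (biexact_zero_id E Z).ses htr,
    biexact_kernel_row ht hr hwvy hvy (biexact_id_zero E W) hk hxy.ses hwv
      (biexact_zero_id E Z).ses htr⟩

lemma Biexact.exists_horseshoe {A B D A₁ P D₁ Q : C} {a : A ⟶ B} {b : B ⟶ D}
    {i : A₁ ⟶ P} {p : P ⟶ A} {j : D₁ ⟶ Q} {q : Q ⟶ D} (hab : Biexact E a b)
    (hip : Biexact E i p) (hjq : Biexact E j q) (hQ : Q ∈ E) :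
    ∃ (N : C) (ι : N ⟶ P ⊞ Q) (π : P ⊞ Q ⟶ B) (α : A₁ ⟶ N) (β : N ⟶ D₁),
      Biexact E ι π ∧ Biexact E α β := by
  obtain ⟨ℓ, hℓ⟩ := hab.exists_lift Q hQ q
  let π : P ⊞ Q ⟶ B := biprod.desc (p ≫ a) ℓ
  have hinl : biprod.inl ≫ π = p ≫ a := biprod.inl_desc _ _
  have hπb : π ≫ b = biprod.snd ≫ q := by ext <;> simp [π, hℓ, hab.ses.w]
  have := hab.ses.epi; have := hip.ses.epi; have := hjq.ses.epi
  have : Epi π := ShortComplex.epi_τ₂_of_exact_of_epi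
    (S₁ := .mk biprod.inl biprod.snd biprod.inl_snd) (S₂ := .mk a b hab.ses.w)
    ⟨p, π, q, hinl.symm, hπb⟩ hab.ses.exact
  have hk := SES.of_epi π
  obtain ⟨β, hβ⟩ := hjq.ses.exists_lift (kernel.ι π ≫ biprod.snd)
    (by rw [assoc, ← hπb, kernel.condition_assoc, zero_comp])
  let α := kernel.lift π (i ≫ biprod.inl) (by rw [assoc, hinl, reassoc_of% hip.ses.w, zero_comp])
  have hα : α ≫ kernel.ι π = i ≫ biprod.inl := kernel.lift_ι _ _ _
  -- the nine diagram with rows `(α, β)`, `(biprod.inl, biprod.snd)`, `(a, b)`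
  -- and columns `(i, p)`, `(kernel.ι, π)`, `(j, q)`
  have hαβ := SES.of_nine hα hβ hinl hπb hip.ses hk hjq.ses (biexact_inl_snd E P Q).ses hab.ses
  exact ⟨_, _, π, α, β,
    biexact_middle_column hα hβ hinl hπb hip hk hjq (biexact_inl_snd E P Q) hab.ses hαβ,
    biexact_kernel_row hα hβ hinl hπb hip hk hjq.ses (biexact_inl_snd E P Q) hab.ses hαβ⟩

end KernelConstructions

structure BiexactResolution (T E : Set C) where
  K : ℕ → C
  W : ℕ → C
  g : ∀ i, K (i + 1) ⟶ W i
  f : ∀ i, W i ⟶ K i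
  mem : ∀ i, W i ∈ T
  biexact : ∀ i, Biexact E (g i) (f i)

def HasBiexactResolution (T E : Set C) (A : C) : Prop :=
  ∃ R : BiexactResolution T E, R.K 0 = A

namespace HasBiexactResolution

variable {T E 𝒲 𝒱 : Set C} {A X : C}

lemma exists_biexact (h : HasBiexactResolution T E A) :
    ∃ (A' W : C) (g : A' ⟶ W) (f : W ⟶ A),
      W ∈ T ∧ Biexact E g f ∧ HasBiexactResolution T E A' := by
  obtain ⟨R, rfl⟩ := h
  exact ⟨R.K 1, R.W 0, R.g 0, R.f 0, R.mem 0, R.biexact 0,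
    ⟨⟨fun i => R.K (i + 1), fun i => R.W (i + 1), fun i => R.g (i + 1), fun i => R.f (i + 1),
      fun i => R.mem (i + 1), fun i => R.biexact (i + 1)⟩, rfl⟩⟩

lemma coinduct (P : C → Prop)
    (step : ∀ B, P B → ∃ (B' W : C) (g : B' ⟶ W) (f : W ⟶ B), W ∈ T ∧ Biexact E g f ∧ P B')
    (hA : P A) : HasBiexactResolution T E A := by
  choose next W g f hW hgf hnext using step
  let s : ℕ → {B // P B} := fun n => Nat.rec ⟨A, hA⟩ (fun _ B => ⟨_, hnext B.1 B.2⟩) n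
  exact ⟨⟨fun n => (s n).1, fun n => W _ (s n).2, fun n => g _ (s n).2, fun n => f _ (s n).2,
    fun n => hW _ (s n).2, fun n => hgf _ (s n).2⟩, rfl⟩

lemma anti {E' : Set C} (h : HasBiexactResolution T E' A) (hE : E ⊆ E') :
    HasBiexactResolution T E A := by
  refine coinduct (HasBiexactResolution T E') (fun B hB => ?_) h
  obtain ⟨B', W, g, f, hW, hgf, hB'⟩ := hB.exists_biexact
  exact ⟨B', W, g, f, hW, hgf.anti hE, hB'⟩

lemma cons {A' W : C} {g : A' ⟶ W} {f : W ⟶ A} (h : HasBiexactResolution T E A') (hW : W ∈ T)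
    (hgf : Biexact E g f) : HasBiexactResolution T E A := by
  refine coinduct (fun B => B = A ∨ HasBiexactResolution T E B) ?_ (Or.inl rfl)
  rintro B (rfl | hB)
  · exact ⟨A', W, g, f, hW, hgf, Or.inr h⟩
  · obtain ⟨B', W, g, f, hW, hgf, hB'⟩ := hB.exists_biexact
    exact ⟨B', W, g, f, hW, hgf, Or.inr hB'⟩

/-- The periodic resolution `⋯ ⟶ W ⟶ W ⟶ 0` whose maps alternate between `𝟙 W` and `0`. -/
lemma zero {W : C} (hW : W ∈ T) : HasBiexactResolution T E (0 : C) := by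
  refine coinduct (fun B => B = 0 ∨ W = B) ?_ (Or.inl rfl)
  rintro _ (rfl | rfl)
  · exact ⟨W, W, 𝟙 W, 0, hW, biexact_id_zero E W, Or.inr rfl⟩
  · exact ⟨0, W, 0, 𝟙 W, hW, biexact_zero_id E W, Or.inl rfl⟩

lemma of_mem (hX : X ∈ T) : HasBiexactResolution T E X :=
  (zero hX).cons hX (biexact_zero_id E X)

lemma of_biexact (hsum : ∀ {U V : C}, U ∈ 𝒲 → V ∈ 𝒲 → (U ⊞ V) ∈ 𝒲) {A B D : C}
    {a : A ⟶ B} {b : B ⟶ D} (hab : Biexact 𝒲 a b) (hA : HasBiexactResolution 𝒲 𝒲 A)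
    (hD : HasBiexactResolution 𝒲 𝒲 D) : HasBiexactResolution 𝒲 𝒲 B := by
  refine coinduct (fun B => ∃ (A D : C) (a : A ⟶ B) (b : B ⟶ D), Biexact 𝒲 a b ∧
    HasBiexactResolution 𝒲 𝒲 A ∧ HasBiexactResolution 𝒲 𝒲 D) ?_ ⟨A, D, a, b, hab, hA, hD⟩
  rintro B ⟨A, D, a, b, hab, hA, hD⟩
  obtain ⟨A₁, P, i, p, hP, hip, hA₁⟩ := hA.exists_biexact
  obtain ⟨D₁, Q, j, q, hQ, hjq, hD₁⟩ := hD.exists_biexact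
  obtain ⟨N, ι, π, α, β, hιπ, hαβ⟩ := hab.exists_horseshoe hip hjq hQ
  exact ⟨N, P ⊞ Q, ι, π, hsum hP hQ, hιπ, A₁, D₁, α, β, hαβ, hA₁, hD₁⟩

lemma trans (hsum : ∀ {U V : C}, U ∈ 𝒲 → V ∈ 𝒲 → (U ⊞ V) ∈ 𝒲)
    (hres : ∀ G ∈ 𝒱, HasBiexactResolution 𝒲 𝒲 G) {X : C} (hX : HasBiexactResolution 𝒱 𝒲 X) :
    HasBiexactResolution 𝒲 𝒲 X := by
  obtain ⟨-, G, -, -, hG, -, -⟩ := hX.exists_biexact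
  obtain ⟨-, W, -, -, hW, -, -⟩ := (hres G hG).exists_biexact
  refine coinduct (fun L => ∃ (H K : C) (a : H ⟶ L) (b : L ⟶ K), Biexact 𝒲 a b ∧
      HasBiexactResolution 𝒲 𝒲 H ∧ HasBiexactResolution 𝒱 𝒲 K) ?_
    ⟨0, X, 0, 𝟙 X, biexact_zero_id 𝒲 X, zero hW, hX⟩
  rintro L ⟨H, K, a, b, hab, hH, hK⟩
  obtain ⟨K₁, G, gK, fK, hG, hgfK, hK₁⟩ := hK.exists_biexact
  obtain ⟨G₁, WG, gG, fG, hWG, hgfG, hG₁⟩ := (hres G hG).exists_biexact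
  obtain ⟨H₁, WH, gH, fH, hWH, hgfH, hH₁⟩ := hH.exists_biexact
  obtain ⟨M, m, t, r, hm, htr⟩ := hgfK.exists_kernel_comp hgfG
  obtain ⟨N, ι, π, α, β, hιπ, hαβ⟩ := hab.exists_horseshoe hgfH hm hWG
  obtain ⟨M₂, m₂, t₂, r₂, hm₂, htr₂⟩ := htr.exists_kernel_comp hαβ
  exact ⟨N, WH ⊞ WG, ι, π, hsum hWH hWG, hιπ,
    M₂, K₁, m₂, β ≫ r, hm₂, of_biexact hsum htr₂ hH₁ hG₁, hK₁⟩

lemma iff_properResolution {X : C} : HasBiexactResolution 𝒲 𝒲 X ↔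
    ∃ (W : ℕ → C) (R : ProperResolution 𝒲 X W), R.IsContraExact := by
  constructor
  · rintro ⟨R, rfl⟩
    exact ⟨R.W, ⟨R.K, rfl, R.g, R.f, R.mem, fun i => (R.biexact i).ses,
      fun i => (biexact_iff.mp (R.biexact i)).2.1⟩, fun i => (biexact_iff.mp (R.biexact i)).2.2⟩
  · rintro ⟨W, R, hR⟩
    exact ⟨⟨R.K, W, R.g, R.f, R.mem, fun i => biexact_iff.mpr ⟨R.ses i, R.proper i, hR i⟩⟩, R.hK⟩

end HasBiexactResolution

/-- Coresolutions are resolutions in the opposite category. -/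
def HasBiexactCoresolution (T E : Set C) (A : C) : Prop :=
  HasBiexactResolution T.op E.op (Opposite.op A)

lemma biprod_mem_op {𝒲 : Set C} (hiso : ∀ {U V : C}, (U ≅ V) → U ∈ 𝒲 → V ∈ 𝒲)
    (hsum : ∀ {U V : C}, U ∈ 𝒲 → V ∈ 𝒲 → (U ⊞ V) ∈ 𝒲) {U V : Cᵒᵖ} (hU : U ∈ 𝒲.op)
    (hV : V ∈ 𝒲.op) : (U ⊞ V) ∈ 𝒲.op :=
  hiso (biprod.opIso U.unop V.unop).unop.symm (hsum hU hV)

namespace HasBiexactCoresolution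

variable {𝒲 𝒱 : Set C}

lemma trans (hiso : ∀ {U V : C}, (U ≅ V) → U ∈ 𝒲 → V ∈ 𝒲)
    (hsum : ∀ {U V : C}, U ∈ 𝒲 → V ∈ 𝒲 → (U ⊞ V) ∈ 𝒲)
    (hres : ∀ G ∈ 𝒱, HasBiexactCoresolution 𝒲 𝒲 G) {X : C}
    (hX : HasBiexactCoresolution 𝒱 𝒲 X) : HasBiexactCoresolution 𝒲 𝒲 X :=
  HasBiexactResolution.trans (biprod_mem_op hiso hsum) (fun G hG => hres G.unop hG) hX

lemma iff_coproperCoresolution {X : C} : HasBiexactCoresolution 𝒲 𝒲 X ↔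
    ∃ (W : ℕ → C) (R : CoproperCoresolution 𝒲 X W), R.IsCovExact := by
  constructor
  · rintro ⟨R, hR⟩
    have h i := biexact_iff.mp (R.biexact i).unop
    exact ⟨fun i => (R.W i).unop, ⟨fun i => (R.K i).unop, congrArg Opposite.unop hR,
      fun i => (R.f i).unop, fun i => (R.g i).unop, R.mem, fun i => (h i).1, fun i => (h i).2.2⟩,
      fun i => (h i).2.1⟩
  · rintro ⟨W, R, hR⟩
    exact ⟨⟨fun i => Opposite.op (R.K i), fun i => Opposite.op (W i), fun i => (R.f i).op,
      fun i => (R.g i).op, R.mem,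
      fun i => (biexact_iff.mpr ⟨R.ses i, hR i, R.coproper i⟩).op⟩, congrArg Opposite.op R.hK⟩

end HasBiexactCoresolution

section GorensteinCategory

variable {𝒲 : Set C}

lemma mem_GW_iff {X : C} :
    X ∈ GW 𝒲 ↔ HasBiexactResolution 𝒲 𝒲 X ∧ HasBiexactCoresolution 𝒲 𝒲 X :=
  (and_congr HasBiexactResolution.iff_properResolution
    HasBiexactCoresolution.iff_coproperCoresolution).symm

lemma subset_GW : 𝒲 ⊆ GW 𝒲 := fun _ hX =>
  mem_GW_iff.mpr ⟨.of_mem hX, HasBiexactResolution.of_mem (T := 𝒲.op) hX⟩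

lemma GW_GW (hiso : ∀ {U V : C}, (U ≅ V) → U ∈ 𝒲 → V ∈ 𝒲)
    (hsum : ∀ {U V : C}, U ∈ 𝒲 → V ∈ 𝒲 → (U ⊞ V) ∈ 𝒲) : GW (GW 𝒲) = GW 𝒲 := by
  refine subset_antisymm (fun X hX => ?_) subset_GW
  obtain ⟨hres, hcores⟩ := mem_GW_iff.mp hX
  exact mem_GW_iff.mpr
    ⟨(hres.anti subset_GW).trans hsum fun G hG => (mem_GW_iff.mp hG).1,
      HasBiexactCoresolution.trans hiso hsum (fun G hG => (mem_GW_iff.mp hG).2)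
        (HasBiexactResolution.anti hcores fun _ hU => subset_GW hU)⟩

end GorensteinCategory

/-- Stability of the Gorenstein category: `Gⁿ(𝒲) = G(𝒲)` for all `n ≥ 1`,
where `Gⁿ(𝒲)` is the `n`-fold iterate of the operation `G` applied to `𝒲`. -/
theorem stmt_13 (𝒲 : Set C)
    (hiso : ∀ {U V : C}, (U ≅ V) → U ∈ 𝒲 → V ∈ 𝒲)
    (hsum : ∀ {U V : C}, U ∈ 𝒲 → V ∈ 𝒲 → (U ⊞ V) ∈ 𝒲) :
    ∀ n : ℕ, 1 ≤ n → (GW (C := C))^[n] 𝒲 = GW 𝒲 := by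
  intro n hn
  induction n, hn using Nat.le_induction with
  | base => rfl
  | succ n _ ih => rw [Function.iterate_succ_apply', ih, GW_GW hiso hsum]
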